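/- Let f : ℝ^{m×n} → ℝ be differentiable with ‖∇f(X) − ∇f(Y)‖_* ≤ L_* ‖X − Y‖ for all X, Y ∈ ℝ^{m×n} and some L_* > 0. Let X, M, M_Q ∈ ℝ^{m×n} and δ, η > 0 satisfy ‖M − M_Q‖_* ≤ δ, and let O ∈ ℝ^{m×n} satisfy ‖O‖ ≤ 1 and ⟨M_Q, O⟩ = ‖M_Q‖_*. Set X⁺ = X − ηO. Then f(X⁺) ≤ f(X) − η‖∇f(X)‖_* + 2η‖∇f(X) − M‖_* + 2ηδ + L_* η²/2. -/

import Mathlib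

open Matrix MeasureTheory

/-- Trace inner product `⟨A,B⟩ = tr(AᵀB) = ∑ᵢⱼ Aᵢⱼ Bᵢⱼ`. -/
def dotp {m n : ℕ} (A B : Matrix (Fin m) (Fin n) ℝ) : ℝ :=
  ∑ i, ∑ j, A i j * B i j

/-- Frobenius norm `‖A‖_F = ⟨A,A⟩^{1/2}`. -/
noncomputable def frobNorm {m n : ℕ} (A : Matrix (Fin m) (Fin n) ℝ) : ℝ :=
  Real.sqrt (dotp A A)

/-- Spectral norm: the `ℓ²→ℓ²` operator norm. -/
noncomputable def specNorm {m n : ℕ} (A : Matrix (Fin m) (Fin n) ℝ) : ℝ :=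
  ‖LinearMap.toContinuousLinearMap (Matrix.toEuclideanLin A)‖

/-- The square root of a positive semidefinite matrix, as `Matrix.PosSemidef.sqrt` was
defined in the older Mathlib (removed since). -/
noncomputable def posSemidefSqrt {n : Type*} [Fintype n] [DecidableEq n]
    {A : Matrix n n ℝ} (hA : A.PosSemidef) : Matrix n n ℝ :=
  hA.1.eigenvectorUnitary.1 * diagonal ((↑) ∘ Real.sqrt ∘ hA.1.eigenvalues) *
  (star hA.1.eigenvectorUnitary : Matrix n n ℝ)

/-- Nuclear norm: the trace of `(AᵀA)^{1/2}`. -/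
noncomputable def nucNorm {m n : ℕ} (A : Matrix (Fin m) (Fin n) ℝ) : ℝ :=
  (posSemidefSqrt (Matrix.posSemidef_conjTranspose_mul_self A)).trace

attribute [local instance] Matrix.frobeniusNormedAddCommGroup Matrix.frobeniusNormedSpace

/-- The gradient of `f : ℝ^{m×n} → ℝ` at `X`, i.e. the matrix representing the
derivative of `f` at `X` with respect to the trace inner product. -/
noncomputable def grad {m n : ℕ} (f : Matrix (Fin m) (Fin n) ℝ → ℝ)
    (X : Matrix (Fin m) (Fin n) ℝ) : Matrix (Fin m) (Fin n) ℝ :=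
  fun i j => fderiv ℝ f X (Matrix.single i j 1)

namespace NucAux

variable {m n : ℕ}

noncomputable def hP (A : Matrix (Fin m) (Fin n) ℝ) : (Aᴴ * A).PosSemidef :=
  Matrix.posSemidef_conjTranspose_mul_self A
noncomputable def dd (A : Matrix (Fin m) (Fin n) ℝ) : Fin n → ℝ := (hP A).1.eigenvalues
noncomputable def vv (A : Matrix (Fin m) (Fin n) ℝ) (i : Fin n) : Fin n → ℝ :=
  ⇑((hP A).1.eigenvectorBasis i)

lemma U_mul_Ut (A : Matrix (Fin m) (Fin n) ℝ) :
    ((hP A).1.eigenvectorUnitary : Matrix (Fin n) (Fin n) ℝ) *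
      ((hP A).1.eigenvectorUnitary : Matrix (Fin n) (Fin n) ℝ)ᵀ = 1 := by
  have := (Matrix.mem_unitaryGroup_iff).mp ((hP A).1.eigenvectorUnitary).2
  rwa [show star ((hP A).1.eigenvectorUnitary : Matrix (Fin n) (Fin n) ℝ)
    = ((hP A).1.eigenvectorUnitary : Matrix (Fin n) (Fin n) ℝ)ᵀ from by
      ext i j; simp [Matrix.star_apply]] at this

lemma col_eq_v (A : Matrix (Fin m) (Fin n) ℝ) (i : Fin n) :
    (fun j => ((hP A).1.eigenvectorUnitary : Matrix (Fin n) (Fin n) ℝ) j i) = vv A i := by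
  funext j; simp [vv, Matrix.IsHermitian.eigenvectorUnitary_apply]


lemma trace_eq_sum_dot (M : Matrix (Fin n) (Fin n) ℝ) (U : Matrix (Fin n) (Fin n) ℝ)
    (hU : U * Uᵀ = 1) :
    M.trace = ∑ i, (fun j => U j i) ⬝ᵥ (M *ᵥ fun j => U j i) := by
  have h1 : M.trace = (Uᵀ * M * U).trace := by
    rw [Matrix.trace_mul_cycle, hU, one_mul]
  rw [h1, Matrix.trace]
  refine Finset.sum_congr rfl fun i _ => ?_
  simp only [Matrix.diag_apply, Matrix.mul_apply, Matrix.transpose_apply, dotProduct,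
    Matrix.mulVec, dotProduct, Finset.sum_mul, Finset.mul_sum]
  rw [Finset.sum_comm]
  exact Finset.sum_congr rfl fun j _ => Finset.sum_congr rfl fun k _ => by ring

lemma dotp_eq_trace (A B : Matrix (Fin m) (Fin n) ℝ) : dotp A B = (Aᴴ * B).trace := by
  simp only [dotp, Matrix.trace, Matrix.diag_apply, Matrix.mul_apply,
    Matrix.conjTranspose_apply, star_trivial]
  rw [Finset.sum_comm]

lemma dot_conjT_mulVec' (A B : Matrix (Fin m) (Fin n) ℝ) (x y : Fin n → ℝ) :
    x ⬝ᵥ ((Aᴴ * B) *ᵥ y) = (A *ᵥ x) ⬝ᵥ (B *ᵥ y) := by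
  rw [← Matrix.mulVec_mulVec, Matrix.dotProduct_mulVec,
    show Aᴴ = Aᵀ from by ext i j; simp [Matrix.conjTranspose_apply], Matrix.vecMul_transpose]

lemma dot_conjT_mulVec (A B : Matrix (Fin m) (Fin n) ℝ) (x : Fin n → ℝ) :
    x ⬝ᵥ ((Aᴴ * B) *ᵥ x) = (A *ᵥ x) ⬝ᵥ (B *ᵥ x) := by
  rw [← Matrix.mulVec_mulVec, Matrix.dotProduct_mulVec,
    show Aᴴ = Aᵀ from by ext i j; simp [Matrix.conjTranspose_apply], Matrix.vecMul_transpose]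

lemma dotp_eq_sum (A B : Matrix (Fin m) (Fin n) ℝ) :
    dotp A B = ∑ i, (A *ᵥ vv A i) ⬝ᵥ (B *ᵥ vv A i) := by
  rw [dotp_eq_trace, trace_eq_sum_dot _ _ (U_mul_Ut A)]
  refine Finset.sum_congr rfl fun i _ => ?_
  rw [col_eq_v, dot_conjT_mulVec]

lemma v_dot_v (A : Matrix (Fin m) (Fin n) ℝ) (i j : Fin n) :
    vv A i ⬝ᵥ vv A j = if i = j then 1 else 0 := by
  have h := orthonormal_iff_ite.mp ((hP A).1.eigenvectorBasis.orthonormal) i j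
  simpa [vv, PiLp.inner_apply, RCLike.inner_apply, dotProduct, mul_comm] using h

lemma mulVec_v (A : Matrix (Fin m) (Fin n) ℝ) (i : Fin n) :
    (Aᴴ * A) *ᵥ vv A i = dd A i • vv A i :=
  (hP A).1.mulVec_eigenvectorBasis i

lemma Av_dot_Av (A : Matrix (Fin m) (Fin n) ℝ) (i j : Fin n) :
    (A *ᵥ vv A i) ⬝ᵥ (A *ᵥ vv A j) = if i = j then dd A i else 0 := by
  rw [← dot_conjT_mulVec', mulVec_v, dotProduct_smul, v_dot_v]
  by_cases h : i = j <;> simp [h]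

lemma d_nonneg (A : Matrix (Fin m) (Fin n) ℝ) (i : Fin n) : 0 ≤ dd A i :=
  (hP A).eigenvalues_nonneg i


lemma euc_norm_eq (k : ℕ) (x : Fin k → ℝ) :
    ‖(WithLp.equiv 2 (Fin k → ℝ)).symm x‖ = Real.sqrt (x ⬝ᵥ x) := by
  rw [EuclideanSpace.norm_eq]
  congr 1
  simp [dotProduct, sq]

lemma euc_norm_eq' (k : ℕ) (x : Fin k → ℝ) :
    ‖WithLp.toLp 2 x‖ = Real.sqrt (x ⬝ᵥ x) := euc_norm_eq k x

lemma specNorm_nonneg (A : Matrix (Fin m) (Fin n) ℝ) : 0 ≤ specNorm A := norm_nonneg _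

lemma mulVec_bound (B : Matrix (Fin m) (Fin n) ℝ) (x : Fin n → ℝ) :
    Real.sqrt ((B *ᵥ x) ⬝ᵥ (B *ᵥ x)) ≤ specNorm B * Real.sqrt (x ⬝ᵥ x) := by
  have h := (LinearMap.toContinuousLinearMap (Matrix.toEuclideanLin B)).le_opNorm
    ((WithLp.equiv 2 (Fin n → ℝ)).symm x)
  simpa [euc_norm_eq', specNorm] using h

lemma dot_self_nonneg' (k : ℕ) (x : Fin k → ℝ) : 0 ≤ x ⬝ᵥ x :=
  Finset.sum_nonneg fun i _ => mul_self_nonneg _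

lemma cauchy_dot (k : ℕ) (x y : Fin k → ℝ) :
    x ⬝ᵥ y ≤ Real.sqrt (x ⬝ᵥ x) * Real.sqrt (y ⬝ᵥ y) := by
  have h := real_inner_le_norm
    ((WithLp.equiv 2 (Fin k → ℝ)).symm x) ((WithLp.equiv 2 (Fin k → ℝ)).symm y)
  rw [euc_norm_eq, euc_norm_eq] at h
  rw [dotProduct_comm x y]
  simpa [PiLp.inner_apply, RCLike.inner_apply, dotProduct] using h


lemma nucNorm_eq_sum (A : Matrix (Fin m) (Fin n) ℝ) :
    nucNorm A = ∑ i, Real.sqrt (dd A i) := by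
  unfold nucNorm
  rw [posSemidefSqrt, Matrix.trace_mul_cycle]
  rw [Unitary.coe_star_mul_self, one_mul, Matrix.trace_diagonal]
  rfl

lemma nucNorm_nonneg (A : Matrix (Fin m) (Fin n) ℝ) : 0 ≤ nucNorm A := by
  rw [nucNorm_eq_sum]; exact Finset.sum_nonneg fun i _ => Real.sqrt_nonneg _

lemma sqrt_Av_dot (A : Matrix (Fin m) (Fin n) ℝ) (i : Fin n) :
    Real.sqrt ((A *ᵥ vv A i) ⬝ᵥ (A *ᵥ vv A i)) = Real.sqrt (dd A i) := by
  rw [Av_dot_Av]; simp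

lemma dual_ub (A B : Matrix (Fin m) (Fin n) ℝ) :
    dotp A B ≤ nucNorm A * specNorm B := by
  rw [dotp_eq_sum, nucNorm_eq_sum, Finset.sum_mul]
  refine Finset.sum_le_sum fun i _ => ?_
  calc (A *ᵥ vv A i) ⬝ᵥ (B *ᵥ vv A i)
      ≤ Real.sqrt ((A *ᵥ vv A i) ⬝ᵥ (A *ᵥ vv A i)) *
        Real.sqrt ((B *ᵥ vv A i) ⬝ᵥ (B *ᵥ vv A i)) := cauchy_dot _ _ _
    _ ≤ Real.sqrt (dd A i) * (specNorm B * Real.sqrt (vv A i ⬝ᵥ vv A i)) := by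
        rw [sqrt_Av_dot]
        exact mul_le_mul_of_nonneg_left (mulVec_bound _ _) (Real.sqrt_nonneg _)
    _ = Real.sqrt (dd A i) * specNorm B := by rw [v_dot_v]; simp

noncomputable def cc (A : Matrix (Fin m) (Fin n) ℝ) (i : Fin n) : ℝ :=
  if dd A i = 0 then 0 else (Real.sqrt (dd A i))⁻¹

noncomputable def OO (A : Matrix (Fin m) (Fin n) ℝ) : Matrix (Fin m) (Fin n) ℝ :=
  fun k l => ∑ i, cc A i * (A *ᵥ vv A i) k * vv A i l

lemma c_mul_d (A : Matrix (Fin m) (Fin n) ℝ) (i : Fin n) :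
    cc A i * dd A i = Real.sqrt (dd A i) := by
  unfold cc
  by_cases h : dd A i = 0
  · simp [h]
  · have hpos : 0 < dd A i := lt_of_le_of_ne (d_nonneg A i) (Ne.symm h)
    have hs : Real.sqrt (dd A i) ≠ 0 := ne_of_gt (Real.sqrt_pos.mpr hpos)
    rw [if_neg h]
    field_simp
    rw [Real.sq_sqrt (d_nonneg A i)]

lemma polar_dotp (A : Matrix (Fin m) (Fin n) ℝ) : dotp A (OO A) = nucNorm A := by
  rw [nucNorm_eq_sum]
  have key : dotp A (OO A) = ∑ i, cc A i * ((A *ᵥ vv A i) ⬝ᵥ (A *ᵥ vv A i)) := by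
    unfold dotp OO
    calc ∑ k, ∑ l, A k l * ∑ i, cc A i * (A *ᵥ vv A i) k * vv A i l
        = ∑ k, ∑ i, ∑ l, A k l * (cc A i * (A *ᵥ vv A i) k * vv A i l) := by
          refine Finset.sum_congr rfl fun k _ => ?_
          simp only [Finset.mul_sum]
          exact Finset.sum_comm
      _ = ∑ i, ∑ k, ∑ l, A k l * (cc A i * (A *ᵥ vv A i) k * vv A i l) := Finset.sum_comm
      _ = ∑ i, cc A i * ((A *ᵥ vv A i) ⬝ᵥ (A *ᵥ vv A i)) := by
          refine Finset.sum_congr rfl fun i _ => ?_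
          rw [dotProduct, Finset.mul_sum]
          refine Finset.sum_congr rfl fun k _ => ?_
          have h1 : ∑ l, A k l * (cc A i * (A *ᵥ vv A i) k * vv A i l)
              = cc A i * (A *ᵥ vv A i) k * ∑ l, A k l * vv A i l := by
            rw [Finset.mul_sum]; exact Finset.sum_congr rfl fun l _ => by ring
          rw [h1]
          have h2 : (A *ᵥ vv A i) k = ∑ l, A k l * vv A i l := by
            simp [Matrix.mulVec, dotProduct]
          rw [← h2]; ring
  rw [key]
  refine Finset.sum_congr rfl fun i _ => ?_
  rw [Av_dot_Av]
  simpa using c_mul_d A i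

lemma sum_coeff_dot (A : Matrix (Fin m) (Fin n) ℝ) (a : Fin n → ℝ) :
    ∑ k, (∑ i, a i * (A *ᵥ vv A i) k) * (∑ j, a j * (A *ᵥ vv A j) k)
      = ∑ i, a i ^ 2 * dd A i := by
  calc ∑ k, (∑ i, a i * (A *ᵥ vv A i) k) * (∑ j, a j * (A *ᵥ vv A j) k)
      = ∑ k, ∑ i, ∑ j, (a i * (A *ᵥ vv A i) k) * (a j * (A *ᵥ vv A j) k) := by
        refine Finset.sum_congr rfl fun k _ => ?_
        rw [Finset.sum_mul]
        exact Finset.sum_congr rfl fun i _ => Finset.mul_sum _ _ _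
    _ = ∑ i, ∑ k, ∑ j, (a i * (A *ᵥ vv A i) k) * (a j * (A *ᵥ vv A j) k) := Finset.sum_comm
    _ = ∑ i, ∑ j, ∑ k, (a i * (A *ᵥ vv A i) k) * (a j * (A *ᵥ vv A j) k) :=
        Finset.sum_congr rfl fun i _ => Finset.sum_comm
    _ = ∑ i, ∑ j, (a i * a j) * ((A *ᵥ vv A i) ⬝ᵥ (A *ᵥ vv A j)) := by
        refine Finset.sum_congr rfl fun i _ => Finset.sum_congr rfl fun j _ => ?_
        rw [dotProduct, Finset.mul_sum]
        exact Finset.sum_congr rfl fun k _ => by ring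
    _ = ∑ i, a i ^ 2 * dd A i := by
        refine Finset.sum_congr rfl fun i _ => ?_
        simp only [Av_dot_Av, mul_ite, mul_zero, Finset.sum_ite_eq]
        simp [sq]

lemma mulVec_OO (A : Matrix (Fin m) (Fin n) ℝ) (x : Fin n → ℝ) (k : Fin m) :
    (OO A *ᵥ x) k = ∑ i, (cc A i * (vv A i ⬝ᵥ x)) * (A *ᵥ vv A i) k := by
  have h0 : (OO A *ᵥ x) k = ∑ l, OO A k l * x l := rfl
  rw [h0]
  calc ∑ l, (∑ i, cc A i * (A *ᵥ vv A i) k * vv A i l) * x l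
      = ∑ l, ∑ i, (cc A i * (A *ᵥ vv A i) k * vv A i l) * x l :=
        Finset.sum_congr rfl fun l _ => Finset.sum_mul _ _ _
    _ = ∑ i, ∑ l, (cc A i * (A *ᵥ vv A i) k * vv A i l) * x l := Finset.sum_comm
    _ = ∑ i, (cc A i * (vv A i ⬝ᵥ x)) * (A *ᵥ vv A i) k := by
        refine Finset.sum_congr rfl fun i _ => ?_
        have h1 : (cc A i * (vv A i ⬝ᵥ x)) * (A *ᵥ vv A i) k
            = cc A i * (∑ l, vv A i l * x l) * (A *ᵥ vv A i) k := rfl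
        rw [h1, Finset.mul_sum, Finset.sum_mul]
        exact Finset.sum_congr rfl fun l _ => by ring

lemma parseval (A : Matrix (Fin m) (Fin n) ℝ) (x : Fin n → ℝ) :
    ∑ i, (vv A i ⬝ᵥ x) ^ 2 = x ⬝ᵥ x := by
  have h := ((hP A).1.eigenvectorBasis).sum_inner_mul_inner
    ((WithLp.equiv 2 (Fin n → ℝ)).symm x) ((WithLp.equiv 2 (Fin n → ℝ)).symm x)
  simp only [PiLp.inner_apply, RCLike.inner_apply, starRingEnd_apply, star_trivial,
    WithLp.equiv_symm_apply, WithLp.ofLp_toLp] at h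
  calc ∑ i, (vv A i ⬝ᵥ x) ^ 2
      = ∑ i, (∑ j, x j * (hP A).1.eigenvectorBasis i j)
          * ∑ j, (hP A).1.eigenvectorBasis i j * x j := by
        refine Finset.sum_congr rfl fun i _ => ?_
        simp only [dotProduct, vv, sq]
        congr 1
        exact Finset.sum_congr rfl fun j _ => mul_comm _ _
    _ = ∑ j, x j * x j := by simpa [mul_comm] using h
    _ = x ⬝ᵥ x := rfl

lemma cc_sq_d_le_one (A : Matrix (Fin m) (Fin n) ℝ) (i : Fin n) :
    cc A i ^ 2 * dd A i ≤ 1 := by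
  unfold cc
  by_cases h : dd A i = 0
  · simp [h]
  · have hpos : 0 < dd A i := lt_of_le_of_ne (d_nonneg A i) (Ne.symm h)
    rw [if_neg h, inv_pow, Real.sq_sqrt (d_nonneg A i), inv_mul_cancel₀ h]

lemma OO_contract (A : Matrix (Fin m) (Fin n) ℝ) (x : Fin n → ℝ) :
    (OO A *ᵥ x) ⬝ᵥ (OO A *ᵥ x) ≤ x ⬝ᵥ x := by
  have h1 : (OO A *ᵥ x) ⬝ᵥ (OO A *ᵥ x)
      = ∑ i, (cc A i * (vv A i ⬝ᵥ x)) ^ 2 * dd A i := by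
    rw [dotProduct]
    rw [show ∑ k, (OO A *ᵥ x) k * (OO A *ᵥ x) k
        = ∑ k, (∑ i, (cc A i * (vv A i ⬝ᵥ x)) * (A *ᵥ vv A i) k)
            * (∑ j, (cc A j * (vv A j ⬝ᵥ x)) * (A *ᵥ vv A j) k) from
      Finset.sum_congr rfl fun k _ => by rw [mulVec_OO]]
    exact sum_coeff_dot A _
  rw [h1, ← parseval A x]
  refine Finset.sum_le_sum fun i _ => ?_
  have : (cc A i * (vv A i ⬝ᵥ x)) ^ 2 * dd A i
      = (cc A i ^ 2 * dd A i) * (vv A i ⬝ᵥ x) ^ 2 := by ring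
  rw [this]
  calc (cc A i ^ 2 * dd A i) * (vv A i ⬝ᵥ x) ^ 2
      ≤ 1 * (vv A i ⬝ᵥ x) ^ 2 :=
        mul_le_mul_of_nonneg_right (cc_sq_d_le_one A i) (sq_nonneg _)
    _ = (vv A i ⬝ᵥ x) ^ 2 := one_mul _

lemma polar_spec (A : Matrix (Fin m) (Fin n) ℝ) : specNorm (OO A) ≤ 1 := by
  unfold specNorm
  refine ContinuousLinearMap.opNorm_le_bound _ zero_le_one fun y => ?_
  rw [one_mul]
  set x : Fin n → ℝ := WithLp.equiv 2 (Fin n → ℝ) y with hx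
  have hy : y = (WithLp.equiv 2 (Fin n → ℝ)).symm x := rfl
  rw [hy, LinearMap.coe_toContinuousLinearMap']
  show ‖(WithLp.equiv 2 (Fin m → ℝ)).symm (Matrix.toLin' (OO A) x)‖ ≤ _
  rw [euc_norm_eq, euc_norm_eq]
  have : Matrix.toLin' (OO A) x = OO A *ᵥ x := rfl
  rw [this]
  exact Real.sqrt_le_sqrt (OO_contract A x)

lemma dotp_add_left (P Q R : Matrix (Fin m) (Fin n) ℝ) :
    dotp (P + Q) R = dotp P R + dotp Q R := by
  simp [dotp, add_mul, Finset.sum_add_distrib]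

lemma dotp_sub_left (P Q R : Matrix (Fin m) (Fin n) ℝ) :
    dotp (P - Q) R = dotp P R - dotp Q R := by
  simp [dotp, sub_mul, Finset.sum_sub_distrib]

lemma dotp_smul_left (c : ℝ) (P R : Matrix (Fin m) (Fin n) ℝ) :
    dotp (c • P) R = c * dotp P R := by
  simp [dotp, Finset.mul_sum, mul_assoc]

lemma dotp_smul_right (c : ℝ) (P R : Matrix (Fin m) (Fin n) ℝ) :
    dotp P (c • R) = c * dotp P R := by
  simp only [dotp, Matrix.smul_apply, smul_eq_mul, Finset.mul_sum]
  exact Finset.sum_congr rfl fun i _ => Finset.sum_congr rfl fun j _ => by ring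

lemma sqrt_congr {k : ℕ} {P Q : Matrix (Fin k) (Fin k) ℝ} (hPp : P.PosSemidef)
    (hQp : Q.PosSemidef) (h : P = Q) : posSemidefSqrt hPp = posSemidefSqrt hQp := by subst h; rfl

lemma nucNorm_neg (A : Matrix (Fin m) (Fin n) ℝ) : nucNorm (-A) = nucNorm A := by
  unfold nucNorm
  rw [sqrt_congr (Matrix.posSemidef_conjTranspose_mul_self (-A))
    (Matrix.posSemidef_conjTranspose_mul_self A) (by simp)]

lemma nucNorm_triangle (P Q : Matrix (Fin m) (Fin n) ℝ) :
    nucNorm (P + Q) ≤ nucNorm P + nucNorm Q := by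
  have h := polar_dotp (P + Q)
  rw [dotp_add_left] at h
  have h1 : dotp P (OO (P + Q)) ≤ nucNorm P := by
    calc dotp P (OO (P + Q)) ≤ nucNorm P * specNorm (OO (P + Q)) := dual_ub _ _
      _ ≤ nucNorm P * 1 := mul_le_mul_of_nonneg_left (polar_spec _) (nucNorm_nonneg _)
      _ = nucNorm P := mul_one _
  have h2 : dotp Q (OO (P + Q)) ≤ nucNorm Q := by
    calc dotp Q (OO (P + Q)) ≤ nucNorm Q * specNorm (OO (P + Q)) := dual_ub _ _
      _ ≤ nucNorm Q * 1 := mul_le_mul_of_nonneg_left (polar_spec _) (nucNorm_nonneg _)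
      _ = nucNorm Q := mul_one _
  linarith

lemma nucNorm_sub_le (P Q R : Matrix (Fin m) (Fin n) ℝ) :
    nucNorm (P - R) ≤ nucNorm (P - Q) + nucNorm (Q - R) := by
  have := nucNorm_triangle (P - Q) (Q - R)
  rwa [sub_add_sub_cancel] at this

lemma abs_dotp_le (A B : Matrix (Fin m) (Fin n) ℝ) :
    |dotp A B| ≤ nucNorm A * specNorm B := by
  rcases abs_cases (dotp A B) with ⟨h, _⟩ | ⟨h, _⟩
  · rw [h]; exact dual_ub A B
  · rw [h]
    have : dotp (-A) B = -dotp A B := by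
      have := dotp_smul_left (-1) A B; simpa using this
    calc -dotp A B = dotp (-A) B := this.symm
      _ ≤ nucNorm (-A) * specNorm B := dual_ub _ _
      _ = nucNorm A * specNorm B := by rw [nucNorm_neg]

lemma fderiv_eq_dotp (f : Matrix (Fin m) (Fin n) ℝ → ℝ) (Y H : Matrix (Fin m) (Fin n) ℝ) :
    fderiv ℝ f Y H = dotp (grad f Y) H := by
  conv_lhs => rw [Matrix.matrix_eq_sum_single H]
  rw [map_sum]
  rw [dotp]
  refine Finset.sum_congr rfl fun i _ => ?_
  rw [map_sum]
  refine Finset.sum_congr rfl fun j _ => ?_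
  have : Matrix.single i j (H i j) = (H i j) • Matrix.single i j 1 := by
    ext a b
    simp only [Matrix.single, Matrix.smul_apply, Matrix.of_apply, smul_eq_mul]
    split <;> simp
  rw [this, _root_.map_smul]
  simp [grad, mul_comm]


lemma specNorm_smul (t : ℝ) (H : Matrix (Fin m) (Fin n) ℝ) :
    specNorm (t • H) = |t| * specNorm H := by
  unfold specNorm
  rw [_root_.map_smul, _root_.map_smul]
  have h2 : ‖t • LinearMap.toContinuousLinearMap (Matrix.toEuclideanLin H)‖
      = ‖t‖ * ‖LinearMap.toContinuousLinearMap (Matrix.toEuclideanLin H)‖ := by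
    exact norm_smul (β := EuclideanSpace ℝ (Fin n) →L[ℝ] EuclideanSpace ℝ (Fin m)) t (LinearMap.toContinuousLinearMap (Matrix.toEuclideanLin H))
  rw [h2, Real.norm_eq_abs]

lemma dotp_sub_left' (P Q R : Matrix (Fin m) (Fin n) ℝ) :
    dotp (P - Q) R = dotp P R - dotp Q R := by
  simp [dotp, sub_mul, Finset.sum_sub_distrib]

lemma descent (nucN : Matrix (Fin m) (Fin n) ℝ → ℝ)
    (dual_ub : ∀ A B : Matrix (Fin m) (Fin n) ℝ, dotp A B ≤ nucN A * specNorm B)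
    (f : Matrix (Fin m) (Fin n) ℝ → ℝ) (Lstar : ℝ) (hL : 0 ≤ Lstar)
    (hf : Differentiable ℝ f)
    (hlip : ∀ X Y, nucN (grad f X - grad f Y) ≤ Lstar * specNorm (X - Y))
    (X H : Matrix (Fin m) (Fin n) ℝ) :
    f (X + H) ≤ f X + dotp (grad f X) H + Lstar * specNorm H ^ 2 / 2 := by
  set sH := specNorm H with hsH
  set c := dotp (grad f X) H with hc
  set K := Lstar * sH ^ 2 with hK
  set φ : ℝ → ℝ := fun t => f (X + t • H) - t * c - K * t ^ 2 / 2 with hφdef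
  have hcurve : ∀ t : ℝ, HasDerivAt (fun s : ℝ => X + s • H) H t := by
    intro t
    have h := ((hasDerivAt_id t).smul_const H).const_add X
    exact h.congr_deriv (one_smul ℝ H)
  have hg : ∀ t : ℝ, HasDerivAt (fun s : ℝ => f (X + s • H))
      (dotp (grad f (X + t • H)) H) t := by
    intro t
    have h1 := ((hf (X + t • H)).hasFDerivAt).comp_hasDerivAt t (hcurve t)
    exact h1.congr_deriv (fderiv_eq_dotp f _ H)
  have hsq : ∀ t : ℝ, HasDerivAt (fun s : ℝ => K * s ^ 2 / 2) (K * t) t := by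
    intro t
    have h := ((hasDerivAt_pow 2 t).const_mul K).div_const 2
    exact h.congr_deriv (by rw [show (2:ℕ) - 1 = 1 from rfl]; push_cast; ring)
  have hφ : ∀ t : ℝ, HasDerivAt φ (dotp (grad f (X + t • H)) H - c - K * t) t := by
    intro t
    exact ((hg t).sub (hasDerivAt_mul_const c)).sub (hsq t)
  have hanti : AntitoneOn φ (Set.Icc 0 1) := by
    refine antitoneOn_of_deriv_nonpos (convex_Icc 0 1)
      (Continuous.continuousOn (continuous_iff_continuousAt.mpr fun t =>
        (hφ t).differentiableAt.continuousAt))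
      (fun t _ => (hφ t).differentiableAt.differentiableWithinAt) ?_
    intro t ht
    rw [interior_Icc] at ht
    rw [(hφ t).deriv]
    have hdiff : dotp (grad f (X + t • H)) H - c
        = dotp (grad f (X + t • H) - grad f X) H := by
      rw [dotp_sub_left']
    have hXsub : (X + t • H) - X = t • H := by abel
    have hb : dotp (grad f (X + t • H) - grad f X) H
        ≤ Lstar * (t * sH) * sH := by
      calc dotp (grad f (X + t • H) - grad f X) H
          ≤ nucN (grad f (X + t • H) - grad f X) * sH := dual_ub _ _
        _ ≤ Lstar * specNorm ((X + t • H) - X) * sH := by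
            refine mul_le_mul_of_nonneg_right (hlip _ _) ?_
            exact norm_nonneg _
        _ = Lstar * (t * sH) * sH := by
            rw [hXsub, specNorm_smul, abs_of_pos ht.1]
    have : K * t = Lstar * (t * sH) * sH := by rw [hK]; ring
    rw [hdiff]
    linarith [hb]
  have h01 : φ 1 ≤ φ 0 := hanti (Set.left_mem_Icc.mpr zero_le_one)
    (Set.right_mem_Icc.mpr zero_le_one) zero_le_one
  simp only [hφdef, one_smul, one_pow, mul_one, zero_smul, add_zero] at h01
  norm_num at h01
  linarith [h01]


end NucAux

/-- If `f` is differentiable with `‖∇f(X) − ∇f(Y)‖_* ≤ L_*‖X − Y‖`,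
`‖M − M_Q‖_* ≤ δ`, and `O` satisfies `‖O‖ ≤ 1`, `⟨M_Q, O⟩ = ‖M_Q‖_*`, then with
`X⁺ = X − ηO`,
`f(X⁺) ≤ f(X) − η‖∇f(X)‖_* + 2η‖∇f(X) − M‖_* + 2ηδ + L_*η²/2`. -/
theorem stmt_10 {m n : ℕ} (f : Matrix (Fin m) (Fin n) ℝ → ℝ) (Lstar : ℝ) (hL : 0 < Lstar)
    (hf : Differentiable ℝ f)
    (hlip : ∀ X Y, nucNorm (grad f X - grad f Y) ≤ Lstar * specNorm (X - Y))
    (X M MQ O : Matrix (Fin m) (Fin n) ℝ) (δ η : ℝ) (hδ : 0 < δ) (hη : 0 < η)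
    (hMQ : nucNorm (M - MQ) ≤ δ)
    (hO : specNorm O ≤ 1) (hMO : dotp MQ O = nucNorm MQ) :
    f (X - η • O)
      ≤ f X - η * nucNorm (grad f X) + 2 * η * nucNorm (grad f X - M)
        + 2 * η * δ + Lstar * η ^ 2 / 2 := by
  have hdesc := NucAux.descent nucNorm NucAux.dual_ub f Lstar hL.le hf hlip X ((-η) • O)
  have hXp : X + (-η) • O = X - η • O := by rw [neg_smul, ← sub_eq_add_neg]
  rw [hXp] at hdesc
  set G := grad f X with hG
  have hdot : dotp G ((-η) • O) = -(η * dotp G O) := by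
    rw [NucAux.dotp_smul_right]; ring
  have hspec0 : 0 ≤ specNorm ((-η) • O) := norm_nonneg _
  have hspec : specNorm ((-η) • O) ≤ η := by
    rw [NucAux.specNorm_smul, abs_neg, abs_of_pos hη]
    calc η * specNorm O ≤ η * 1 := mul_le_mul_of_nonneg_left hO hη.le
      _ = η := mul_one _
  have hsq : specNorm ((-η) • O) ^ 2 ≤ η ^ 2 := by nlinarith
  have e1 : dotp G O = dotp MQ O + dotp (G - MQ) O := by
    conv_lhs => rw [show G = MQ + (G - MQ) from by abel]
    rw [NucAux.dotp_add_left]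
  have hOn : nucNorm (G - MQ) * specNorm O ≤ nucNorm (G - MQ) := by
    calc nucNorm (G - MQ) * specNorm O ≤ nucNorm (G - MQ) * 1 :=
      mul_le_mul_of_nonneg_left hO (NucAux.nucNorm_nonneg _)
      _ = nucNorm (G - MQ) := mul_one _
  have e2 : -(nucNorm (G - MQ)) ≤ dotp (G - MQ) O :=
    (abs_le.mp ((NucAux.abs_dotp_le (G - MQ) O).trans hOn)).1
  have e3 : nucNorm (G - MQ) ≤ nucNorm (G - M) + δ :=
    (NucAux.nucNorm_sub_le G M MQ).trans (by linarith [hMQ])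
  have e4 : nucNorm G - nucNorm (G - MQ) ≤ nucNorm MQ := by
    have h := NucAux.nucNorm_triangle (G - MQ) MQ
    rw [sub_add_cancel] at h
    linarith
  have e5 : nucNorm G - 2 * (nucNorm (G - M) + δ) ≤ dotp G O := by
    rw [e1, hMO]
    linarith [e2, e3, e4]
  have hK : Lstar * specNorm ((-η) • O) ^ 2 / 2 ≤ Lstar * η ^ 2 / 2 := by nlinarith
  have e6 : η * (nucNorm G - 2 * (nucNorm (G - M) + δ)) ≤ η * dotp G O :=
    mul_le_mul_of_nonneg_left e5 hη.le
  rw [hdot] at hdesc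
  nlinarith [hdesc, e6, hK]
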